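/- Let α < 0 < β, and let (ε₁, ε₃) be the unique pair of reals satisfying ε₃ − ε₁ = α + β and h(ε₁) + h(ε₃) = h(α) + h(β). Then ε₁ ≤ 0 and |ε₁| ≤ c(α)·min{|α|, |β|}, where c(z) = (cosh z − 1)/(cosh z + 1). -/

import Mathlib

/-- The function `h` from the paper: `h ε = ε` if `ε ≥ 0`, `h ε = sinh ε` otherwise. -/
noncomputable def hFun (ε : ℝ) : ℝ := if 0 ≤ ε then ε else Real.sinh ε

/-- The damping coefficient `c(z) = (cosh z − 1)/(cosh z + 1)`. -/
noncomputable def cFun (z : ℝ) : ℝ := (Real.cosh z - 1) / (Real.cosh z + 1)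

/-!
Write `a = -α`. With `α + β` fixed, `t ↦ h t + h (t + α + β)` is strictly increasing and
`ε₁` is the point where it takes the value `h α + h β`, so both claims amount to evaluating
it at `0` and at `-c(α) m`, `m = min a β`. At `0` the inequality is the superadditivity
`h x + y ≤ h (x + y)` for `y ≥ 0`. At `-c m` it reduces, by the mean value theorem for
`sinh` on `[a - (1 - c) m, a]`, to the identity `(1 - c) cosh a = 1 + c`.
-/

open Real

namespace Interaction

lemma hFun_eq_min (x : ℝ) : hFun x = min x (sinh x) := by
  unfold hFun
  split_ifs with hx
  · exact (min_eq_left (self_le_sinh_iff.mpr hx)).symm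
  · exact (min_eq_right (sinh_le_self_iff.mpr (not_le.mp hx).le)).symm

lemma hFun_of_nonneg {x : ℝ} (hx : 0 ≤ x) : hFun x = x := if_pos hx

lemma hFun_of_nonpos {x : ℝ} (hx : x ≤ 0) : hFun x = sinh x := by
  rw [hFun_eq_min, min_eq_right (sinh_le_self_iff.mpr hx)]

lemma hFun_le_self (x : ℝ) : hFun x ≤ x := hFun_eq_min x ▸ min_le_left _ _

lemma hFun_strictMono : StrictMono hFun := fun x y hxy => by
  simpa only [hFun_eq_min] using min_lt_min hxy (sinh_strictMono hxy)

lemma hFun_add_le_hFun_add {y : ℝ} (hy : 0 ≤ y) (x : ℝ) : hFun x + y ≤ hFun (x + y) := by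
  have hsinh : sinh x + y ≤ sinh (x + y) := by
    have := sinh_sub_id_strictMono.monotone (le_add_of_nonneg_right hy : x ≤ x + y)
    linarith
  rw [hFun_eq_min, hFun_eq_min, ← min_add_add_right]
  exact min_le_min le_rfl hsinh

lemma cFun_neg (z : ℝ) : cFun (-z) = cFun z := by
  simp only [cFun, cosh_neg]

lemma cFun_nonneg (z : ℝ) : 0 ≤ cFun z :=
  div_nonneg (by linarith [one_le_cosh z]) (by linarith [one_le_cosh z])

lemma cFun_le_one (z : ℝ) : cFun z ≤ 1 :=
  (div_le_one (by linarith [one_le_cosh z])).mpr (by linarith)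

lemma one_sub_cFun_mul_cosh (z : ℝ) : (1 - cFun z) * cosh z = 1 + cFun z := by
  have : cosh z + 1 ≠ 0 := by linarith [one_le_cosh z]
  unfold cFun
  field_simp
  ring

lemma sinh_sub_sinh_le_mul_cosh {u v : ℝ} (h : |v| ≤ u) :
    sinh u - sinh v ≤ (u - v) * cosh u := by
  rcases ((le_abs_self v).trans h).eq_or_lt with rfl | hvu
  · simp
  obtain ⟨ξ, hξ, hslope⟩ := exists_hasDerivAt_eq_slope sinh cosh hvu
    continuous_sinh.continuousOn fun x _ => hasDerivAt_sinh x
  have hcosh : cosh ξ ≤ cosh u := by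
    rw [cosh_le_cosh, abs_of_nonneg ((abs_nonneg v).trans h)]
    exact abs_le.mpr ⟨by linarith [neg_abs_le v, hξ.1], hξ.2.le⟩
  rw [eq_div_iff (sub_pos.mpr hvu).ne'] at hslope
  nlinarith [sub_pos.mpr hvu]

lemma sinh_sub_sinh_damped_le {a m : ℝ} (hm : 0 ≤ m) (hma : m ≤ a) :
    sinh a - sinh (a - (1 - cFun a) * m) ≤ (1 + cFun a) * m := by
  have hc₀ := cFun_nonneg a
  have hc₁ := cFun_le_one a
  have hshift : 0 ≤ (1 - cFun a) * m := mul_nonneg (by linarith) hm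
  have hshift' : (1 - cFun a) * m ≤ m := by nlinarith
  calc sinh a - sinh (a - (1 - cFun a) * m)
      ≤ (a - (a - (1 - cFun a) * m)) * cosh a :=
        sinh_sub_sinh_le_mul_cosh (abs_le.mpr ⟨by linarith, by linarith⟩)
    _ = (1 + cFun a) * m := by rw [← one_sub_cFun_mul_cosh]; ring

lemma hFun_add_hFun_damped_le {α β : ℝ} (hα : α ≤ 0) (hβ : 0 ≤ β) :
    hFun (-(cFun α * min (-α) β)) + hFun (-(cFun α * min (-α) β) + (α + β)) ≤
      hFun α + hFun β := by
  set a := -α with ha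
  have ha₀ : 0 ≤ a := neg_nonneg.mpr hα
  have hc₀ : 0 ≤ cFun a := cFun_nonneg a
  have hcm : 0 ≤ cFun a * min a β := mul_nonneg hc₀ (le_min ha₀ hβ)
  rw [show α = -a by rw [ha, neg_neg], cFun_neg, hFun_of_nonpos (neg_nonpos.mpr hcm),
    hFun_of_nonpos (neg_nonpos.mpr (by linarith)), hFun_of_nonneg hβ, sinh_neg, sinh_neg]
  rcases le_total a β with haβ | hβa
  · have hkey := sinh_sub_sinh_damped_le ha₀ le_rfl
    rw [show a - (1 - cFun a) * a = cFun a * a by ring] at hkey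
    rw [min_eq_left haβ]
    have := hFun_le_self (-(cFun a * a) + (-a + β))
    linarith
  · have hkey := sinh_sub_sinh_damped_le hβ hβa
    have hcβ : 0 ≤ cFun a * β := mul_nonneg hc₀ hβ
    rw [min_eq_right hβa, hFun_of_nonpos (by linarith)]
    have := self_le_sinh_iff.mpr hcβ
    have harg : -(cFun a * β) + (-a + β) = -(a - (1 - cFun a) * β) := by ring
    rw [harg, sinh_neg]
    linarith

end Interaction

open Interaction in
/-- Interaction of a 3-shock α < 0 and a 3-rarefaction β > 0: the reflected 1-wave ε₁
is a shock whose size is damped by the factor c(α). -/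
theorem statement7 (α β ε₁ ε₃ : ℝ) (hαβ : α < 0 ∧ 0 < β)
    (h1 : ε₃ - ε₁ = α + β)
    (h2 : hFun ε₁ + hFun ε₃ = hFun α + hFun β) :
    ε₁ ≤ 0 ∧ |ε₁| ≤ cFun α * min |α| |β| := by
  obtain ⟨hα, hβ⟩ := hαβ
  have hF : StrictMono fun t => hFun t + hFun (t + (α + β)) := fun x y hxy =>
    add_lt_add (hFun_strictMono hxy) (hFun_strictMono (by linarith))
  have hε : hFun ε₁ + hFun (ε₁ + (α + β)) = hFun α + hFun β := by
    rwa [show ε₁ + (α + β) = ε₃ by linarith]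
  have hε₁ : ε₁ ≤ 0 := by
    refine hF.le_iff_le.mp ?_
    simp only [hε, zero_add, hFun_of_nonneg le_rfl, hFun_of_nonneg hβ.le]
    exact hFun_add_le_hFun_add hβ.le α
  have hdamped : -(cFun α * min |α| |β|) ≤ ε₁ := by
    refine hF.le_iff_le.mp ?_
    rw [abs_of_neg hα, abs_of_pos hβ]
    simpa only [hε] using hFun_add_hFun_damped_le hα.le hβ.le
  exact ⟨hε₁, by rw [abs_of_nonpos hε₁]; linarith⟩
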